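/- Let ℓ₁,…,ℓₙ be positive integers, ℓ = max_k ℓ_k, γ_k = ℓ/ℓ_k, ‖γ‖ = Σ_{k=1}^n γ_k, and ρ(x) = (Σ_{k=1}^n x_k^{2ℓ_k})^{1/(2ℓ)} for x ∈ ℝⁿ. Then for every real s: the integral ∫_{{x : ρ(x) ≥ 1}} ρ(x)^s dx is finite if and only if s < -‖γ‖; and in that case, for every t > 0, ∫_{{x : ρ(x) ≥ t}} ρ(x)^s dx = t^{s+‖γ‖} ∫_{{x : ρ(x) ≥ 1}} ρ(x)^s dx. -/

import Mathlib

open MeasureTheory Real Set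
open scoped ENNReal

set_option linter.unusedVariables false

noncomputable section

namespace Semielliptic

/-- `σ(x) = Σ_k x_k^{2ℓ_k}` -/
def sig {n : ℕ} (l : Fin n → ℕ) (x : Fin n → ℝ) : ℝ := ∑ k, x k ^ (2 * l k)

/-- `ℓ = max_k ℓ_k` -/
def lmax {n : ℕ} (l : Fin n → ℕ) : ℕ := Finset.univ.sup l

/-- the anisotropic length `ρ(x) = σ(x)^{1/(2ℓ)}` -/
def rho {n : ℕ} (l : Fin n → ℕ) (x : Fin n → ℝ) : ℝ :=
  sig l x ^ ((1 : ℝ) / (2 * (lmax l : ℝ)))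

/-- `γ_k = ℓ/ℓ_k` -/
def gam {n : ℕ} (l : Fin n → ℕ) (k : Fin n) : ℝ := (lmax l : ℝ) / (l k : ℝ)

/-- `‖γ‖ = Σ_k γ_k` -/
def gnorm {n : ℕ} (l : Fin n → ℕ) : ℝ := ∑ k, gam l k

/-- `α·γ = Σ_k α_k γ_k` -/
def dotg {n : ℕ} (l : Fin n → ℕ) (a : Fin n → ℕ) : ℝ := ∑ k, (a k : ℝ) * gam l k

/-- the partial derivative in the k-th coordinate direction -/
def pd {n : ℕ} {E : Type*} [NormedAddCommGroup E] [NormedSpace ℝ E] (k : Fin n)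
    (f : (Fin n → ℝ) → E) : (Fin n → ℝ) → E :=
  fun x => fderiv ℝ f x (Pi.single k 1)

/-- the multi-index partial derivative `∂^α` -/
def pdM {n : ℕ} {E : Type*} [NormedAddCommGroup E] [NormedSpace ℝ E] (a : Fin n → ℕ)
    (f : (Fin n → ℝ) → E) : (Fin n → ℝ) → E :=
  Fin.foldr n (fun k g => (pd k)^[a k] g) f

/-- the symbol `L(x) = Σ_{α·γ=ℓ} A_α (ix)^α` -/
def symb {n m : ℕ} {ι : Type} [Fintype ι] (l : Fin n → ℕ)
    (A : ι → Matrix (Fin m) (Fin m) ℂ) (mi : ι → Fin n → ℕ)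
    (x : Fin n → ℝ) : Matrix (Fin m) (Fin m) ℂ :=
  ∑ i, (∏ k, (Complex.I * (x k : ℂ)) ^ (mi i k)) • A i

/-- the Frobenius (Hilbert–Schmidt) norm of a matrix -/
def fro {m : ℕ} (M : Matrix (Fin m) (Fin m) ℂ) : ℝ :=
  Real.sqrt (∑ i, ∑ j, ‖M i j‖ ^ 2)

/-- the integrand `e^{ix·z}(iz)^β σ(z) e^{-tσ(z)} L(z)⁻¹` -/
def jker {n m : ℕ} {ι : Type} [Fintype ι] (l : Fin n → ℕ)
    (A : ι → Matrix (Fin m) (Fin m) ℂ) (mi : ι → Fin n → ℕ)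
    (b : Fin n → ℕ) (x : Fin n → ℝ) (t : ℝ) (z : Fin n → ℝ) : Matrix (Fin m) (Fin m) ℂ :=
  (Complex.exp (Complex.I * ((∑ k, x k * z k : ℝ) : ℂ)) *
      (∏ k, (Complex.I * (z k : ℂ)) ^ (b k)) *
      ((sig l z : ℝ) : ℂ) * ((Real.exp (-(t * sig l z)) : ℝ) : ℂ)) • (symb l A mi z)⁻¹

/-- `J_β(x,t) = ∫_{ℝⁿ} e^{ix·z}(iz)^β σ(z) e^{-tσ(z)} L(z)⁻¹ dz`, computed entrywise -/
def Jmat {n m : ℕ} {ι : Type} [Fintype ι] (l : Fin n → ℕ)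
    (A : ι → Matrix (Fin m) (Fin m) ℂ) (mi : ι → Fin n → ℕ)
    (b : Fin n → ℕ) (x : Fin n → ℝ) (t : ℝ) : Matrix (Fin m) (Fin m) ℂ :=
  Matrix.of fun i j => ∫ z : Fin n → ℝ, jker l A mi b x t z i j

/-- `F_β(x) = (2π)^{-n} ∫_0^∞ J_β(x,t) dt`, computed entrywise -/
def Fmat {n m : ℕ} {ι : Type} [Fintype ι] (l : Fin n → ℕ)
    (A : ι → Matrix (Fin m) (Fin m) ℂ) (mi : ι → Fin n → ℕ)
    (b : Fin n → ℕ) (x : Fin n → ℝ) : Matrix (Fin m) (Fin m) ℂ :=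
  Matrix.of fun i j =>
    ((((2 * Real.pi) ^ n)⁻¹ : ℝ) : ℂ) * ∫ t in Ioi (0 : ℝ), Jmat l A mi b x t i j

/-- `v` is the weak derivative `∂^α u`: tested against scalar test functions. -/
def IsWeakDeriv {n m : ℕ} (a : Fin n → ℕ) (u v : (Fin n → ℝ) → Fin m → ℂ) : Prop :=
  ∀ φ : (Fin n → ℝ) → ℝ, ContDiff ℝ (⊤ : ℕ∞) φ → HasCompactSupport φ →
    ∫ x : Fin n → ℝ, pdM a φ x • u x
      = ((-1 : ℝ) ^ (∑ k, a k)) • ∫ x : Fin n → ℝ, φ x • v x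

open Classical in
/-- the (finite) set of multi-indices with `α·γ ≤ r` -/
def idxSet {n : ℕ} (l : Fin n → ℕ) (r : ℝ) : Finset (Fin n → ℕ) :=
  (Finset.image (fun f : Fin n → Fin (⌈r⌉₊ + 1) => fun k => (f k : ℕ)) Finset.univ).filter
    (fun a => dotg l a ≤ r)

/-- `𝓛u = Σ_{α·γ=ℓ} A_α ∂^α u`, computed from the given family of (weak) derivatives of `u` -/
def Lop {n m : ℕ} {ι : Type} [Fintype ι] (A : ι → Matrix (Fin m) (Fin m) ℂ)
    (mi : ι → Fin n → ℕ) (du : (Fin n → ℕ) → (Fin n → ℝ) → Fin m → ℂ)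
    (x : Fin n → ℝ) : Fin m → ℂ :=
  ∑ i, (A i).mulVec (du (mi i) x)

/-- `𝓛φ` for smooth `φ` (classical derivatives) -/
def LopC {n m : ℕ} {ι : Type} [Fintype ι] (A : ι → Matrix (Fin m) (Fin m) ℂ)
    (mi : ι → Fin n → ℕ) (φ : (Fin n → ℝ) → Fin m → ℂ) (x : Fin n → ℝ) : Fin m → ℂ :=
  ∑ i, (A i).mulVec (pdM (mi i) φ x)

/-- the formal adjoint `𝓛*φ = Σ (-1)^{|α|} A_α* ∂^α φ` on smooth functions -/
def LopAdj {n m : ℕ} {ι : Type} [Fintype ι] (A : ι → Matrix (Fin m) (Fin m) ℂ)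
    (mi : ι → Fin n → ℕ) (φ : (Fin n → ℝ) → Fin m → ℂ) (x : Fin n → ℝ) : Fin m → ℂ :=
  ∑ i, ((-1 : ℂ) ^ (∑ k, mi i k)) • (A i).conjTranspose.mulVec (pdM (mi i) φ x)

/-- the pairing `u·v = v* u` in `ℂ^m` -/
def pairc {m : ℕ} (u v : Fin m → ℂ) : ℂ := ∑ j, u j * (starRingEnd ℂ) (v j)

/-! The anisotropic dilation `δ_t x = (t^{γ_k} x_k)_k` multiplies `ρ` by `t` and Lebesgue
measure by `t^{‖γ‖}`, so the distribution `ν` of `ρ` satisfies `ν(t • A) = t^{‖γ‖} ν(A)`. Hence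
the integral of `r^s` against `ν` over `[t, ∞)` is `t^{s+‖γ‖}` times the one over `[1, ∞)`, and
splitting `[1, ∞)` into the dyadic shells `[2^j, 2^{j+1})` turns the latter into a geometric series
with ratio `2^{s+‖γ‖}` times the integral over `[1, 2)`, which is positive and finite because
`{1 ≤ ρ < 2}` is bounded with nonempty interior. -/

open scoped Pointwise

def IsHomogeneousMeasure (ν : Measure ℝ) (g : ℝ) : Prop :=
  ∀ c : ℝ, 0 < c → ν.map (c * ·) = ENNReal.ofReal (c ^ (-g)) • ν

section HomogeneousMeasure

variable {ν : Measure ℝ} {g : ℝ}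

theorem setLIntegral_smul_rpow
    (hν : IsHomogeneousMeasure ν g) (s : ℝ) {t : ℝ} (ht : 0 < t) {S : Set ℝ}
    (hS : MeasurableSet S) (hS0 : S ⊆ Ioi 0) :
    ∫⁻ r in t • S, ENNReal.ofReal (r ^ s) ∂ν
      = ENNReal.ofReal (t ^ (s + g)) * ∫⁻ r in S, ENNReal.ofReal (r ^ s) ∂ν := by
  have hpre : t • S = (t⁻¹ * ·) ⁻¹' S := by
    ext r
    simp [Set.mem_smul_set_iff_inv_smul_mem₀ ht.ne']
  calc ∫⁻ r in t • S, ENNReal.ofReal (r ^ s) ∂ν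
      = ∫⁻ r in (t⁻¹ * ·) ⁻¹' S, ENNReal.ofReal ((t * (t⁻¹ * r)) ^ s) ∂ν := by
        simp only [hpre, mul_inv_cancel_left₀ ht.ne']
    _ = ∫⁻ u in S, ENNReal.ofReal ((t * u) ^ s) ∂(ν.map (t⁻¹ * ·)) :=
        (setLIntegral_map (f := fun u => ENNReal.ofReal ((t * u) ^ s)) hS (by fun_prop)
          (measurable_const_mul _)).symm
    _ = ENNReal.ofReal (t ^ g) *
          ∫⁻ u in S, ENNReal.ofReal (t ^ s) * ENNReal.ofReal (u ^ s) ∂ν := by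
        rw [hν _ (inv_pos.2 ht), Measure.restrict_smul, lintegral_smul_measure, inv_rpow ht.le,
          rpow_neg ht.le, inv_inv]
        congr 1
        refine setLIntegral_congr_fun hS fun u hu => ?_
        rw [mul_rpow ht.le (hS0 hu).le, ENNReal.ofReal_mul (by positivity)]
    _ = ENNReal.ofReal (t ^ (s + g)) * ∫⁻ r in S, ENNReal.ofReal (r ^ s) ∂ν := by
        rw [lintegral_const_mul' _ _ ENNReal.ofReal_ne_top, ← mul_assoc,
          ← ENNReal.ofReal_mul (by positivity), ← rpow_add ht, add_comm]

theorem setLIntegral_Ici_rpow (hν : IsHomogeneousMeasure ν g) (s : ℝ) {t : ℝ} (ht : 0 < t) :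
    ∫⁻ r in Ici t, ENNReal.ofReal (r ^ s) ∂ν
      = ENNReal.ofReal (t ^ (s + g)) * ∫⁻ r in Ici 1, ENNReal.ofReal (r ^ s) ∂ν := by
  simpa [LinearOrderedField.smul_Ici ht] using
    setLIntegral_smul_rpow hν s ht measurableSet_Ici
      fun _ hr => mem_Ioi.2 (one_pos.trans_le hr)

theorem two_pow_smul_Ico_one_two (j : ℕ) :
    (2 : ℝ) ^ j • Ico (1 : ℝ) 2 = Ico (2 ^ j) (2 ^ (j + 1)) := by
  rw [LinearOrderedField.smul_Ico (by positivity), mul_one, pow_succ]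

theorem Ici_one_eq_iUnion_Ico_two_pow : Ici (1 : ℝ) = ⋃ j : ℕ, Ico (2 ^ j) (2 ^ (j + 1)) := by
  ext r
  simp only [mem_Ici, mem_iUnion, mem_Ico]
  constructor
  · intro hr
    exact exists_nat_pow_near hr one_lt_two
  · rintro ⟨j, hj, -⟩
    exact (one_le_pow₀ one_le_two).trans hj

theorem setLIntegral_Ici_one_rpow_eq_tsum (hν : IsHomogeneousMeasure ν g) (s : ℝ) :
    ∫⁻ r in Ici 1, ENNReal.ofReal (r ^ s) ∂ν
      = (∑' j : ℕ, ENNReal.ofReal (2 ^ (s + g)) ^ j) *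
          ∫⁻ r in Ico 1 2, ENNReal.ofReal (r ^ s) ∂ν := by
  rw [Ici_one_eq_iUnion_Ico_two_pow,
    lintegral_iUnion (s := fun j : ℕ => Ico ((2 : ℝ) ^ j) (2 ^ (j + 1)))
      (fun _ => measurableSet_Ico) (pow_right_mono₀ one_le_two).pairwise_disjoint_on_Ico_succ,
    ← ENNReal.tsum_mul_right]
  refine tsum_congr fun j => ?_
  rw [← two_pow_smul_Ico_one_two, setLIntegral_smul_rpow hν s (by positivity) measurableSet_Ico
      fun _ hr => mem_Ioi.2 (one_pos.trans_le hr.1), ← rpow_pow_comm zero_le_two,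
    ENNReal.ofReal_pow (by positivity)]

theorem rpow_mem_Icc_of_mem_Ico {r : ℝ} (hr : r ∈ Ico (1 : ℝ) 2) (s : ℝ) :
    r ^ s ∈ Icc ((2 : ℝ) ^ (-|s|)) (2 ^ |s|) := by
  have hr0 : 0 < r := one_pos.trans_le hr.1
  constructor
  · calc (2 : ℝ) ^ (-|s|) ≤ r ^ (-|s|) :=
          rpow_le_rpow_of_nonpos hr0 hr.2.le (neg_nonpos.2 (abs_nonneg s))
      _ ≤ r ^ s := rpow_le_rpow_of_exponent_le hr.1 (neg_abs_le s)
  · calc r ^ s ≤ r ^ |s| := rpow_le_rpow_of_exponent_le hr.1 (le_abs_self s)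
      _ ≤ 2 ^ |s| := rpow_le_rpow hr0.le hr.2.le (abs_nonneg s)

theorem setLIntegral_Ici_one_rpow_ne_top_iff
    (hν : IsHomogeneousMeasure ν g)
    (h0 : ν (Ico 1 2) ≠ 0) (htop : ν (Ico 1 2) ≠ ∞) (s : ℝ) :
    ∫⁻ r in Ici 1, ENNReal.ofReal (r ^ s) ∂ν ≠ ∞ ↔ s < -g := by
  have hmeas : Measurable fun r : ℝ => ENNReal.ofReal (r ^ s) := by fun_prop
  have hH0 : ∫⁻ r in Ico 1 2, ENNReal.ofReal (r ^ s) ∂ν ≠ 0 := by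
    refine (lt_of_lt_of_le ?_ (setLIntegral_mono hmeas fun r hr =>
      ENNReal.ofReal_le_ofReal (rpow_mem_Icc_of_mem_Ico hr s).1)).ne'
    rw [setLIntegral_const]
    exact ENNReal.mul_pos (ENNReal.ofReal_pos.2 (by positivity)).ne' h0
  have hHtop : ∫⁻ r in Ico 1 2, ENNReal.ofReal (r ^ s) ∂ν ≠ ∞ := by
    refine ne_top_of_le_ne_top ?_ (setLIntegral_mono measurable_const fun r hr =>
      ENNReal.ofReal_le_ofReal (rpow_mem_Icc_of_mem_Ico hr s).2)
    rw [setLIntegral_const]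
    exact ENNReal.mul_ne_top ENNReal.ofReal_ne_top htop
  rw [setLIntegral_Ici_one_rpow_eq_tsum hν, ENNReal.tsum_geometric, Ne, ENNReal.mul_eq_top]
  simp only [hH0, hHtop, ne_eq, not_false_eq_true, and_false, and_true, false_or,
    ENNReal.inv_eq_top, tsub_eq_zero_iff_le, not_le, ENNReal.ofReal_lt_one]
  rw [← rpow_zero 2, rpow_lt_rpow_left_iff one_lt_two, ← lt_neg_iff_add_neg]

end HomogeneousMeasure

section AnisotropicDilation

variable {n : ℕ} {l : Fin n → ℕ}

theorem sig_nonneg (l : Fin n → ℕ) (x : Fin n → ℝ) : 0 ≤ sig l x :=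
  Finset.sum_nonneg fun k _ => (even_two_mul (l k)).pow_nonneg (x k)

theorem rho_nonneg (l : Fin n → ℕ) (x : Fin n → ℝ) : 0 ≤ rho l x :=
  rpow_nonneg (sig_nonneg l x) _

theorem continuous_rho (l : Fin n → ℕ) : Continuous (rho l) :=
  (continuous_finsetSum _ fun k _ => (continuous_apply k).pow _).rpow_const
    fun _ => Or.inr (by positivity)

theorem measurable_rho (l : Fin n → ℕ) : Measurable (rho l) :=
  (continuous_rho l).measurable

theorem lmax_pos (hn : 0 < n) (hl : ∀ k, 0 < l k) : 0 < lmax l :=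
  (hl ⟨0, hn⟩).trans_le (Finset.le_sup (Finset.mem_univ _))

theorem rho_pow_two_mul_lmax (hℓ : lmax l ≠ 0) (x : Fin n → ℝ) :
    rho l x ^ (2 * lmax l) = sig l x := by
  rw [rho, one_div, show 2 * (lmax l : ℝ) = ((2 * lmax l : ℕ) : ℝ) by push_cast; rfl,
    rpow_inv_natCast_pow (sig_nonneg l x) (by positivity)]

theorem abs_le_of_sig_le (hl : ∀ k, 0 < l k) {x : Fin n → ℝ} {R : ℝ} (hR : 1 ≤ R)
    (hx : sig l x ≤ R) (k : Fin n) : |x k| ≤ R := by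
  rcases le_total |x k| 1 with h | h
  · exact h.trans hR
  calc |x k| ≤ |x k| ^ (2 * l k) := le_self_pow₀ h (by have := hl k; omega)
    _ = x k ^ (2 * l k) := (even_two_mul (l k)).pow_abs (x k)
    _ ≤ sig l x := Finset.single_le_sum (f := fun i => x i ^ (2 * l i))
        (fun i _ => (even_two_mul (l i)).pow_nonneg (x i)) (Finset.mem_univ k)
    _ ≤ R := hx

def dilation (l : Fin n → ℕ) (t : ℝ) : (Fin n → ℝ) →ₗ[ℝ] Fin n → ℝ :=
  Matrix.toLin' (Matrix.diagonal fun k => t ^ gam l k)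

theorem dilation_apply (t : ℝ) (x : Fin n → ℝ) (k : Fin n) :
    dilation l t x k = t ^ gam l k * x k := by
  simp [dilation, Matrix.mulVec_diagonal]

theorem det_dilation {t : ℝ} (ht : 0 < t) : LinearMap.det (dilation l t) = t ^ gnorm l := by
  rw [dilation, LinearMap.det_toLin', Matrix.det_diagonal, gnorm, rpow_sum_of_pos ht]

theorem sig_dilation (hl : ∀ k, 0 < l k) {t : ℝ} (ht : 0 < t) (x : Fin n → ℝ) :
    sig l (dilation l t x) = t ^ (2 * lmax l) * sig l x := by
  rw [sig, sig, Finset.mul_sum]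
  refine Finset.sum_congr rfl fun k _ => ?_
  have hlk : (l k : ℝ) ≠ 0 := by exact_mod_cast (hl k).ne'
  rw [dilation_apply, mul_pow, ← rpow_natCast (t ^ gam l k), ← rpow_mul ht.le, ← rpow_natCast t,
    gam]
  congr 2
  push_cast
  field_simp

theorem rho_dilation (hn : 0 < n) (hl : ∀ k, 0 < l k) {t : ℝ} (ht : 0 < t) (x : Fin n → ℝ) :
    rho l (dilation l t x) = t * rho l x := by
  have hℓ : 2 * lmax l ≠ 0 := by have := lmax_pos hn hl; omega
  rw [← pow_left_inj₀ (rho_nonneg l _) (by have := rho_nonneg l x; positivity) hℓ, mul_pow,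
    rho_pow_two_mul_lmax (by omega), rho_pow_two_mul_lmax (by omega), sig_dilation hl ht]

theorem isHomogeneousMeasure_map_rho (hn : 0 < n) (hl : ∀ k, 0 < l k) :
    IsHomogeneousMeasure (volume.map (rho l)) (gnorm l) := by
  intro c hc
  have hdet : LinearMap.det (dilation l c) ≠ 0 := by
    rw [det_dilation hc]
    positivity
  have hcomp : (c * ·) ∘ rho l = rho l ∘ dilation l c :=
    funext fun x => (rho_dilation hn hl hc x).symm
  rw [Measure.map_map (measurable_const_mul c) (measurable_rho l), hcomp,
    ← Measure.map_map (measurable_rho l) (dilation l c).continuous_of_finiteDimensional.measurable,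
    Measure.map_linearMap_addHaar_eq_smul_addHaar volume hdet, Measure.map_smul, det_dilation hc,
    abs_of_pos (by positivity), ← rpow_neg hc.le]

theorem volume_rho_preimage_Ico_ne_top (hn : 0 < n) (hl : ∀ k, 0 < l k) :
    volume (rho l ⁻¹' Ico 1 2) ≠ ∞ := by
  have hsub : rho l ⁻¹' Ico 1 2 ⊆ Metric.closedBall 0 (2 ^ (2 * lmax l)) := by
    intro x hx
    rw [mem_closedBall_zero_iff, pi_norm_le_iff_of_nonneg (by positivity)]
    refine fun k => abs_le_of_sig_le hl (one_le_pow₀ one_le_two) ?_ k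
    rw [← rho_pow_two_mul_lmax (lmax_pos hn hl).ne']
    exact pow_le_pow_left₀ (rho_nonneg l x) hx.2.le _
  exact ((measure_mono hsub).trans_lt measure_closedBall_lt_top).ne

theorem volume_rho_preimage_Ico_ne_zero (hn : 0 < n) (hl : ∀ k, 0 < l k) :
    volume (rho l ⁻¹' Ico 1 2) ≠ 0 := by
  have hρ1 : 0 < rho l 1 := rpow_pos_of_pos (by simpa [sig] using hn) _
  have hmem : dilation l (3 / 2 / rho l 1) 1 ∈ rho l ⁻¹' Ioo 1 2 := by
    rw [mem_preimage, rho_dilation hn hl (by positivity), div_mul_cancel₀ _ hρ1.ne']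
    norm_num
  exact (((isOpen_Ioo.preimage (continuous_rho l)).measure_pos volume ⟨_, hmem⟩).trans_le
    (measure_mono (preimage_mono Ioo_subset_Ico_self))).ne'

end AnisotropicDilation

/-- Lemma 2.1(a): `∫_{ρ≥1} ρ^s dx` is finite iff `s < -‖γ‖`, and then the scaling
identity `∫_{ρ≥t} ρ^s = t^{s+‖γ‖} ∫_{ρ≥1} ρ^s` holds for all `t > 0`. -/
theorem stmt0 (n : ℕ) (hn : 0 < n) (l : Fin n → ℕ) (hl : ∀ k, 0 < l k) (s : ℝ) :
    (IntegrableOn (fun x : Fin n → ℝ => rho l x ^ s) {x | 1 ≤ rho l x} volume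
      ↔ s < -gnorm l)
    ∧ (s < -gnorm l → ∀ t : ℝ, 0 < t →
        ∫ x in {x : Fin n → ℝ | t ≤ rho l x}, rho l x ^ s
          = t ^ (s + gnorm l) * ∫ x in {x : Fin n → ℝ | 1 ≤ rho l x}, rho l x ^ s) := by
  have hν := isHomogeneousMeasure_map_rho hn hl
  have hmeas : Measurable fun x => rho l x ^ s := (measurable_rho l).pow_const s
  have hnonneg (t : ℝ) : 0 ≤ᵐ[volume.restrict {x | t ≤ rho l x}] fun x => rho l x ^ s :=
    ae_of_all _ fun x => rpow_nonneg (rho_nonneg l x) s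
  have hpush (t : ℝ) : ∫⁻ x in {x | t ≤ rho l x}, ENNReal.ofReal (rho l x ^ s)
      = ∫⁻ r in Ici t, ENNReal.ofReal (r ^ s) ∂volume.map (rho l) :=
    (setLIntegral_map (f := fun r => ENNReal.ofReal (r ^ s)) measurableSet_Ici (by fun_prop)
      (measurable_rho l)).symm
  have hshell : volume.map (rho l) (Ico 1 2) = volume (rho l ⁻¹' Ico 1 2) :=
    Measure.map_apply (measurable_rho l) measurableSet_Ico
  refine ⟨?_, fun _ t ht => ?_⟩
  · rw [IntegrableOn, ← lintegral_ofReal_ne_top_iff_integrable hmeas.aestronglyMeasurable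
      (hnonneg 1), hpush]
    exact setLIntegral_Ici_one_rpow_ne_top_iff hν (hshell ▸ volume_rho_preimage_Ico_ne_zero hn hl)
      (hshell ▸ volume_rho_preimage_Ico_ne_top hn hl) s
  · rw [integral_eq_lintegral_of_nonneg_ae (hnonneg t) hmeas.aestronglyMeasurable,
      integral_eq_lintegral_of_nonneg_ae (hnonneg 1) hmeas.aestronglyMeasurable, hpush, hpush,
      setLIntegral_Ici_rpow hν s ht, ENNReal.toReal_mul, ENNReal.toReal_ofReal (by positivity)]

end Semielliptic
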